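/- Let τ := Δ + q_δ, where q_δ is the absolute value of the δ-quantile of Lap(Δ/ε). Then the PositiveLaplaceMechanism with parameters ε, τ and sensitivity Δ is (ε, δ)-differentially private with respect to the neighboring relation |v − v'| ≤ Δ on real inputs. -/

import Mathlib

/-!
Write `b = Δ/ε` and `q = q_δ`. Off the event `η ≤ -q`, which has probability exactly `δ`, the
output `v + τ + η` is never clipped by the `max` (as `τ - q = Δ ≥ |v - v'|`), so there the
outputs on `v` and `v'` differ by translating the noise by `v - v'`; translating by `t` changes
the Laplace density by a factor at most `exp (|t| / b) ≤ exp ε`.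
-/

open MeasureTheory Real

/-- The Laplace distribution on ℝ with location 0 and scale `b`. -/
noncomputable def laplace (b : ℝ) : Measure ℝ :=
  volume.withDensity fun x => ENNReal.ofReal ((2 * b)⁻¹ * Real.exp (-|x| / b))

/-- On input `v`, the PositiveLaplaceMechanism samples `η ~ Lap(Δ/ε)` and outputs
`max v (v + τ + η)`; so `P(M(v) ∈ S)` is the Laplace measure of the preimage. -/
noncomputable def posLapProb (ε τ Δ : ℝ) (v : ℝ) (S : Set ℝ) : ENNReal :=
  laplace (Δ / ε) {η : ℝ | max v (v + τ + η) ∈ S}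

open Set

lemma laplace_Iic_of_nonpos {b c : ℝ} (hb : 0 < b) (hc : c ≤ 0) :
    laplace b (Iic c) = ENNReal.ofReal (exp (c / b) / 2) := by
  have hb' : 0 < b⁻¹ := inv_pos.mpr hb
  have hdensity : EqOn (fun x => ENNReal.ofReal ((2 * b)⁻¹ * exp (-|x| / b)))
      (fun x => ENNReal.ofReal ((2 * b)⁻¹ * exp (b⁻¹ * x))) (Iic c) := by
    intro x hx
    dsimp only
    rw [abs_of_nonpos (hx.out.trans hc), neg_neg, div_eq_inv_mul]
  rw [laplace, withDensity_apply _ measurableSet_Iic, setLIntegral_congr_fun measurableSet_Iic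
    hdensity, ← ofReal_integral_eq_lintegral_ofReal ((integrableOn_exp_mul_Iic hb' c).const_mul _)
    (ae_of_all _ fun x => by positivity), integral_const_mul, integral_exp_mul_Iic hb']
  congr 1
  field_simp

lemma laplace_Iic_neg_quantile {b δ : ℝ} (hb : 0 < b) (hδ₀ : 0 < δ) (hδ : δ ≤ 1 / 2) :
    laplace b (Iic (-(b * log (1 / (2 * δ))))) = ENNReal.ofReal δ := by
  have hq : 0 ≤ b * log (1 / (2 * δ)) :=
    mul_nonneg hb.le (log_nonneg (by rw [le_div_iff₀ (by positivity)]; linarith))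
  rw [laplace_Iic_of_nonpos hb (neg_nonpos.mpr hq), neg_div, mul_div_cancel_left₀ _ hb.ne',
    exp_neg, exp_log (by positivity)]
  congr 1
  field_simp

lemma laplace_le_exp_mul_preimage_sub {b : ℝ} (hb : 0 < b) (t : ℝ) (A : Set ℝ) :
    laplace b A ≤ ENNReal.ofReal (exp (|t| / b)) * laplace b ((· - t) ⁻¹' A) := by
  have hdensity (x : ℝ) : (2 * b)⁻¹ * exp (-|x - t| / b) ≤
      exp (|t| / b) * ((2 * b)⁻¹ * exp (-|x| / b)) := by
    rw [mul_left_comm, ← exp_add]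
    gcongr
    rw [← add_div]
    gcongr
    linarith [abs_sub_abs_le_abs_sub x t]
  simp only [laplace, withDensity_apply']
  rw [← (measurePreserving_sub_right volume t).setLIntegral_comp_preimage_emb
    (measurableEmbedding_subRight t), ← lintegral_const_mul' _ _ ENNReal.ofReal_ne_top]
  gcongr with x
  rw [← ENNReal.ofReal_mul (exp_pos _).le]
  exact ENNReal.ofReal_le_ofReal (hdensity x)

lemma preimage_sub_inter_Ioi_subset {v v' τ q : ℝ} (S : Set ℝ) (hτ : q + |v - v'| ≤ τ) :
    (· - (v - v')) ⁻¹' ({η | max v (v + τ + η) ∈ S} ∩ Ioi (-q)) ⊆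
      {η | max v' (v' + τ + η) ∈ S} := by
  rintro η ⟨hηS, hηq⟩
  have := neg_abs_le (v - v')
  have := le_abs_self (v - v')
  simp only [mem_ofPred_eq, mem_Ioi] at hηS hηq ⊢
  rw [max_eq_right (by linarith)] at hηS
  rw [max_eq_right (by linarith)]
  convert hηS using 1
  ring

lemma posLapProb_le_exp_mul_add {ε δ Δ τ : ℝ} (hε : 0 < ε) (hΔ : 0 < Δ) (hδ₀ : 0 < δ)
    (hδ : δ ≤ 1 / 2) (hτ : Δ + Δ / ε * log (1 / (2 * δ)) ≤ τ) {v v' : ℝ} (hv : |v - v'| ≤ Δ)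
    (S : Set ℝ) :
    posLapProb ε τ Δ v S ≤ ENNReal.ofReal (exp ε) * posLapProb ε τ Δ v' S + ENNReal.ofReal δ := by
  set b := Δ / ε
  set q := b * log (1 / (2 * δ))
  have hb : 0 < b := div_pos hΔ hε
  have hshift : |v - v'| / b ≤ ε := by
    rw [div_le_iff₀ hb, mul_div_cancel₀ _ hε.ne']
    exact hv
  set A := {η | max v (v + τ + η) ∈ S}
  calc laplace b A
      ≤ laplace b (A ∩ Ioi (-q)) + laplace b (A \ Ioi (-q)) := measure_le_inter_add_sdiff _ _ _
    _ ≤ ENNReal.ofReal (exp (|v - v'| / b)) * laplace b ((· - (v - v')) ⁻¹' (A ∩ Ioi (-q)))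
          + laplace b (Iic (-q)) := by
        gcongr
        · exact laplace_le_exp_mul_preimage_sub hb _ _
        · exact fun η hη => mem_Iic.mpr (not_lt.mp hη.2)
    _ ≤ ENNReal.ofReal (exp ε) * posLapProb ε τ Δ v' S + ENNReal.ofReal δ := by
        rw [laplace_Iic_neg_quantile hb hδ₀ hδ]
        gcongr
        exact measure_mono (preimage_sub_inter_Ioi_subset S (by linarith))

/-- With `τ := Δ + q_δ` where `q_δ = (Δ/ε)·ln(1/(2δ))` is the absolute value of the
`δ`-quantile of `Lap(Δ/ε)`, the PositiveLaplaceMechanism is `(ε, δ)`-DP with respect to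
the neighboring relation `|v − v'| ≤ Δ`. -/
theorem stmt_3 (ε δ Δ : ℝ) (hε : 0 < ε) (hδ : δ ∈ Set.Ioo (0 : ℝ) (1 / 2)) (hΔ : 0 < Δ)
    (τ : ℝ) (hτ : τ = Δ + (Δ / ε) * Real.log (1 / (2 * δ))) :
    ∀ v v' : ℝ, |v - v'| ≤ Δ → ∀ S : Set ℝ, MeasurableSet S →
      posLapProb ε τ Δ v S ≤
        ENNReal.ofReal (Real.exp ε) * posLapProb ε τ Δ v' S + ENNReal.ofReal δ ∧
      posLapProb ε τ Δ v' S ≤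
        ENNReal.ofReal (Real.exp ε) * posLapProb ε τ Δ v S + ENNReal.ofReal δ := by
  intro v v' hv S _
  have hδ₀ : 0 < δ := hδ.1
  have hδ₁ : δ ≤ 1 / 2 := hδ.2.le
  exact ⟨posLapProb_le_exp_mul_add hε hΔ hδ₀ hδ₁ hτ.ge hv S,
    posLapProb_le_exp_mul_add hε hΔ hδ₀ hδ₁ hτ.ge (by rwa [abs_sub_comm]) S⟩
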